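/- arXiv:1910.14553 — 2 statements merged into one kernel-verified Lean document; each statement's English description precedes it below -/
import Mathlib

section
/- Strict monotonicity of the total mass in the remaining resource level: assume 0 < φ ≤ 1, 0 < μ ≤ ψ, ω > 0, and at least one of φ < 1 or μ < ψ, and fix R⁺ > 0. Then the function N(a) = (I₁(a, R⁺)/I₂(a, R⁺))·ln(R⁺/a) is strictly decreasing on (0, R⁺): for 0 < a₁ < a₂ < R⁺ one has N(a₁) > N(a₂). -/
/-
Split `∫_{a₁}^{R⁺}` at `a₂`. On `[a₁, a₂]` and on `[a₂, R⁺]` compare `k_sm` and `k_ms` with their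
values at `a₂`: as `k_sm` decreases and `k_ms` increases, `I₁(a₁,a₂) I₂(a₂,R⁺) ≥ I₁(a₂,R⁺) I₂(a₁,a₂)`,
so by the mediant inequality the ratio `I₁(a,R⁺)/I₂(a,R⁺)` does not increase with `a`. The factor
`ln(R⁺/a)` decreases strictly, which gives the strict inequality.
-/

open Real Filter intervalIntegral

/-- Nondimensional stationary-to-moving switching rate. -/
noncomputable def ksm (φ R : ℝ) : ℝ := φ - (φ - 1) * Real.exp (-R)

/-- Nondimensional moving-to-stationary switching rate. -/
noncomputable def kms (ψ μ ω R : ℝ) : ℝ := ψ - (ψ - μ) * Real.exp (-ω * R)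

/-- I₁(a,b) = ∫_a^b k_sm(r)/r dr. -/
noncomputable def I1 (φ a b : ℝ) : ℝ := ∫ r in a..b, ksm φ r / r

/-- I₂(a,b) = ∫_a^b k_ms(r)/r dr. -/
noncomputable def I2 (ψ μ ω a b : ℝ) : ℝ := ∫ r in a..b, kms ψ μ ω r / r

lemma continuous_ksm (φ : ℝ) : Continuous (ksm φ) := by
  unfold ksm; fun_prop

lemma continuous_kms (ψ μ ω : ℝ) : Continuous (kms ψ μ ω) := by
  unfold kms; fun_prop

lemma antitone_ksm {φ : ℝ} (hφ1 : φ ≤ 1) : Antitone (ksm φ) := by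
  intro x y hxy
  have : exp (-y) ≤ exp (-x) := exp_le_exp.2 (neg_le_neg hxy)
  unfold ksm
  nlinarith

lemma le_ksm {φ : ℝ} (hφ1 : φ ≤ 1) (r : ℝ) : φ ≤ ksm φ r := by
  unfold ksm
  nlinarith [exp_pos (-r)]

lemma monotone_kms {ψ μ ω : ℝ} (hμψ : μ ≤ ψ) (hω : 0 ≤ ω) : Monotone (kms ψ μ ω) := by
  intro x y hxy
  have : exp (-ω * y) ≤ exp (-ω * x) := exp_le_exp.2 (by nlinarith)
  unfold kms
  nlinarith

lemma le_kms {ψ μ ω r : ℝ} (hμψ : μ ≤ ψ) (hω : 0 ≤ ω) (hr : 0 ≤ r) : μ ≤ kms ψ μ ω r := by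
  have : exp (-ω * r) ≤ 1 := exp_le_one_iff.2 (by nlinarith)
  unfold kms
  nlinarith

lemma div_le_add_div_add {P Q S T : ℝ} (hT : 0 < T) (hST : 0 < S + T) (h : Q * S ≤ P * T) :
    Q / T ≤ (P + Q) / (S + T) := by
  rw [div_le_div_iff₀ hT hST]
  linarith

section IntegralDivId

variable {f : ℝ → ℝ} {a b c : ℝ}

lemma intervalIntegrable_div_id (hf : ContinuousOn f (Set.Icc a b)) (ha : 0 < a) (hab : a ≤ b) :
    IntervalIntegrable (fun r => f r / r) MeasureTheory.volume a b :=
  (hf.div continuousOn_id fun _ hx => (ha.trans_le hx.1).ne').intervalIntegrable_of_Icc hab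

lemma integral_const_div_id (ha : 0 < a) (hb : 0 < b) :
    ∫ r in a..b, c / r = c * log (b / a) := by
  simp_rw [div_eq_mul_inv, integral_const_mul, integral_inv_of_pos ha hb, div_eq_mul_inv]

lemma mul_log_le_integral_div_id (hf : ContinuousOn f (Set.Icc a b)) (ha : 0 < a) (hab : a ≤ b)
    (hc : ∀ x ∈ Set.Icc a b, c ≤ f x) :
    c * log (b / a) ≤ ∫ r in a..b, f r / r := by
  rw [← integral_const_div_id ha (ha.trans_le hab)]
  refine integral_mono_on hab (intervalIntegrable_div_id continuousOn_const ha hab)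
    (intervalIntegrable_div_id hf ha hab) fun x hx => ?_
  exact div_le_div_of_nonneg_right (hc x hx) (ha.trans_le hx.1).le

lemma integral_div_id_le_mul_log (hf : ContinuousOn f (Set.Icc a b)) (ha : 0 < a) (hab : a ≤ b)
    (hc : ∀ x ∈ Set.Icc a b, f x ≤ c) :
    ∫ r in a..b, f r / r ≤ c * log (b / a) := by
  rw [← integral_const_div_id ha (ha.trans_le hab)]
  refine integral_mono_on hab (intervalIntegrable_div_id hf ha hab)
    (intervalIntegrable_div_id continuousOn_const ha hab) fun x hx => ?_
  exact div_le_div_of_nonneg_right (hc x hx) (ha.trans_le hx.1).le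

lemma integral_div_id_pos (hf : ContinuousOn f (Set.Icc a b))
    (ha : 0 < a) (hab : a < b) (hc : 0 < c) (hcf : ∀ x ∈ Set.Icc a b, c ≤ f x) :
    0 < ∫ r in a..b, f r / r :=
  (mul_pos hc (log_pos ((one_lt_div ha).2 hab))).trans_le
    (mul_log_le_integral_div_id hf ha hab.le hcf)

end IntegralDivId

section Ratio

variable {f g : ℝ → ℝ} {a₁ a₂ b : ℝ}
  (hf : ContinuousOn f (Set.Icc a₁ b)) (hg : ContinuousOn g (Set.Icc a₁ b))
  (hf_anti : AntitoneOn f (Set.Icc a₁ b)) (hg_mono : MonotoneOn g (Set.Icc a₁ b))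
  (hf_nonneg : ∀ x ∈ Set.Icc a₁ b, 0 ≤ f x)
  (ha₁ : 0 < a₁) (h₁₂ : a₁ ≤ a₂) (h₂b : a₂ < b)
include hf hg hf_anti hg_mono hf_nonneg ha₁ h₁₂ h₂b

lemma integral_div_id_mul_le_mul (hg_nonneg : ∀ x ∈ Set.Icc a₁ b, 0 ≤ g x) :
    (∫ r in a₂..b, f r / r) * (∫ r in a₁..a₂, g r / r) ≤
      (∫ r in a₁..a₂, f r / r) * (∫ r in a₂..b, g r / r) := by
  have ha₂ : 0 < a₂ := ha₁.trans_le h₁₂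
  have hleft : Set.Icc a₁ a₂ ⊆ Set.Icc a₁ b := Set.Icc_subset_Icc_right h₂b.le
  have hright : Set.Icc a₂ b ⊆ Set.Icc a₁ b := Set.Icc_subset_Icc_left h₁₂
  have ha₂_mem : a₂ ∈ Set.Icc a₁ b := ⟨h₁₂, h₂b.le⟩
  have hℓ : 0 ≤ log (a₂ / a₁) := log_nonneg ((one_le_div ha₁).2 h₁₂)
  have hm : 0 ≤ log (b / a₂) := (log_pos ((one_lt_div ha₂).2 h₂b)).le
  have hP := mul_log_le_integral_div_id (hf.mono hleft) ha₁ h₁₂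
    fun x hx => hf_anti (hleft hx) ha₂_mem hx.2
  have hQ := integral_div_id_le_mul_log (hf.mono hright) ha₂ h₂b.le
    fun x hx => hf_anti ha₂_mem (hright hx) hx.1
  have hS := integral_div_id_le_mul_log (hg.mono hleft) ha₁ h₁₂
    fun x hx => hg_mono (hleft hx) ha₂_mem hx.2
  have hT := mul_log_le_integral_div_id (hg.mono hright) ha₂ h₂b.le
    fun x hx => hg_mono ha₂_mem (hright hx) hx.1
  have hS_nonneg : 0 ≤ ∫ r in a₁..a₂, g r / r :=
    integral_nonneg h₁₂ fun x hx => div_nonneg (hg_nonneg x (hleft hx)) (ha₁.trans_le hx.1).le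
  have hfa₂ := hf_nonneg a₂ ha₂_mem
  have hga₂ := hg_nonneg a₂ ha₂_mem
  calc _ ≤ (f a₂ * log (b / a₂)) * (g a₂ * log (a₂ / a₁)) :=
        mul_le_mul hQ hS hS_nonneg (mul_nonneg hfa₂ hm)
    _ = (f a₂ * log (a₂ / a₁)) * (g a₂ * log (b / a₂)) := by ring
    _ ≤ _ := mul_le_mul hP hT (mul_nonneg hga₂ hm) ((mul_nonneg hfa₂ hℓ).trans hP)

lemma integral_div_id_div_le (hg_pos : ∀ x ∈ Set.Icc a₁ b, 0 < g x) :
    (∫ r in a₂..b, f r / r) / (∫ r in a₂..b, g r / r) ≤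
      (∫ r in a₁..b, f r / r) / (∫ r in a₁..b, g r / r) := by
  have ha₂ : 0 < a₂ := ha₁.trans_le h₁₂
  have hleft : Set.Icc a₁ a₂ ⊆ Set.Icc a₁ b := Set.Icc_subset_Icc_right h₂b.le
  have hright : Set.Icc a₂ b ⊆ Set.Icc a₁ b := Set.Icc_subset_Icc_left h₁₂
  have ha₁_mem : a₁ ∈ Set.Icc a₁ b := ⟨le_rfl, h₁₂.trans h₂b.le⟩
  have ha₂_mem : a₂ ∈ Set.Icc a₁ b := ⟨h₁₂, h₂b.le⟩
  have hT_pos := integral_div_id_pos (hg.mono hright) ha₂ h₂b (hg_pos a₂ ha₂_mem)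
    fun x hx => hg_mono ha₂_mem (hright hx) hx.1
  have hST_pos := integral_div_id_pos hg ha₁ (h₁₂.trans_lt h₂b) (hg_pos a₁ ha₁_mem)
    fun x hx => hg_mono ha₁_mem hx hx.1
  rw [← integral_add_adjacent_intervals (intervalIntegrable_div_id (hf.mono hleft) ha₁ h₁₂)
      (intervalIntegrable_div_id (hf.mono hright) ha₂ h₂b.le),
    ← integral_add_adjacent_intervals (intervalIntegrable_div_id (hg.mono hleft) ha₁ h₁₂)
      (intervalIntegrable_div_id (hg.mono hright) ha₂ h₂b.le)] at *
  exact div_le_add_div_add hT_pos hST_pos <| integral_div_id_mul_le_mul hf hg hf_anti hg_mono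
    hf_nonneg ha₁ h₁₂ h₂b fun x hx => (hg_pos x hx).le

end Ratio

theorem mass_strictAnti_general (φ ψ μ ω Rplus : ℝ)
    (hφ0 : 0 < φ) (hφ1 : φ ≤ 1) (hμ0 : 0 < μ) (hμψ : μ ≤ ψ) (hω : 0 < ω) :
    ∀ a₁ a₂ : ℝ, 0 < a₁ → a₁ < a₂ → a₂ < Rplus →
      (I1 φ a₂ Rplus / I2 ψ μ ω a₂ Rplus) * Real.log (Rplus / a₂) <
      (I1 φ a₁ Rplus / I2 ψ μ ω a₁ Rplus) * Real.log (Rplus / a₁) := by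
  intro a₁ a₂ ha₁ h₁₂ h₂R
  have ha₂ : 0 < a₂ := ha₁.trans h₁₂
  have hRplus : 0 < Rplus := ha₂.trans h₂R
  have hμ_le_kms (x : ℝ) (hx : 0 < x) : μ ≤ kms ψ μ ω x := le_kms hμψ hω.le hx.le
  have hratio : I1 φ a₂ Rplus / I2 ψ μ ω a₂ Rplus ≤ I1 φ a₁ Rplus / I2 ψ μ ω a₁ Rplus :=
    integral_div_id_div_le (continuous_ksm φ).continuousOn (continuous_kms ψ μ ω).continuousOn
      ((antitone_ksm hφ1).antitoneOn _) ((monotone_kms hμψ hω.le).monotoneOn _)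
      (fun x _ => hφ0.le.trans (le_ksm hφ1 x)) ha₁ h₁₂.le h₂R
      (fun x hx => hμ0.trans_le (hμ_le_kms x (ha₁.trans_le hx.1)))
  have hI1_pos : 0 < I1 φ a₂ Rplus := integral_div_id_pos (continuous_ksm φ).continuousOn
    ha₂ h₂R hφ0 fun x _ => le_ksm hφ1 x
  have hI2_pos : 0 < I2 ψ μ ω a₂ Rplus := integral_div_id_pos (continuous_kms ψ μ ω).continuousOn
    ha₂ h₂R hμ0 fun x hx => hμ_le_kms x (ha₂.trans_le hx.1)
  have hlog_pos : 0 < log (Rplus / a₂) := log_pos ((one_lt_div ha₂).2 h₂R)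
  have hlog : log (Rplus / a₂) < log (Rplus / a₁) :=
    log_lt_log (div_pos hRplus ha₂) (div_lt_div_of_pos_left hRplus ha₁ h₁₂)
  calc I1 φ a₂ Rplus / I2 ψ μ ω a₂ Rplus * log (Rplus / a₂)
      < I1 φ a₂ Rplus / I2 ψ μ ω a₂ Rplus * log (Rplus / a₁) :=
        mul_lt_mul_of_pos_left hlog (div_pos hI1_pos hI2_pos)
    _ ≤ I1 φ a₁ Rplus / I2 ψ μ ω a₁ Rplus * log (Rplus / a₁) :=
        mul_le_mul_of_nonneg_right hratio (hlog_pos.trans hlog).le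

/-- Strict monotonicity of the total mass in the remaining resource level:
N(a) = (I₁(a,R⁺)/I₂(a,R⁺))·ln(R⁺/a) is strictly decreasing on (0, R⁺). -/
theorem mass_strictAnti (φ ψ μ ω Rplus : ℝ)
    (hφ0 : 0 < φ) (hφ1 : φ ≤ 1) (hμ0 : 0 < μ) (hμψ : μ ≤ ψ) (hω : 0 < ω)
    (hne : φ < 1 ∨ μ < ψ) (hRp : 0 < Rplus) :
    ∀ a₁ a₂ : ℝ, 0 < a₁ → a₁ < a₂ → a₂ < Rplus →
      (I1 φ a₂ Rplus / I2 ψ μ ω a₂ Rplus) * Real.log (Rplus / a₂) <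
      (I1 φ a₁ Rplus / I2 ψ μ ω a₁ Rplus) * Real.log (Rplus / a₁) :=
  mass_strictAnti_general φ ψ μ ω Rplus hφ0 hφ1 hμ0 hμψ hω
end

section
/- Monotonicity theorem (speed increasing in mass, decreasing in remaining resources): assume 0 < φ ≤ 1, 0 < μ ≤ ψ, ω > 0, at least one of φ < 1 or μ < ψ, and fix R⁺ > 0. Suppose that for i = 1, 2 the triples (cᵢ, R⁻ᵢ, Nᵢ) satisfy 0 < cᵢ < 1, 0 < R⁻ᵢ < R⁺, cᵢ/(1−cᵢ) = I₁(R⁻ᵢ, R⁺)/I₂(R⁻ᵢ, R⁺), and Nᵢ = (cᵢ/(1−cᵢ))·ln(R⁺/R⁻ᵢ). If N₁ < N₂, then c₁ < c₂ and R⁻₁ > R⁻₂. -/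
open Real Filter intervalIntegral

section Aux

variable {φ ψ μ ω : ℝ}

lemma ksm_pos (hφ0 : 0 < φ) (hφ1 : φ ≤ 1) (r : ℝ) : 0 < ksm φ r := by
  unfold ksm
  nlinarith [Real.exp_pos (-r)]

lemma kms_pos (hμ0 : 0 < μ) (hμψ : μ ≤ ψ) (hω : 0 < ω) {r : ℝ} (hr : 0 ≤ r) :
    0 < kms ψ μ ω r := by
  unfold kms
  have h1 : Real.exp (-ω * r) ≤ 1 := by
    rw [Real.exp_le_one_iff]
    nlinarith
  nlinarith [Real.exp_pos (-ω * r)]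

lemma ksm_cont : Continuous (ksm φ) := by
  unfold ksm; fun_prop

lemma kms_cont : Continuous (kms ψ μ ω) := by
  unfold kms; fun_prop

lemma intgr_aux {a b : ℝ} (ha : 0 < a) (hb : 0 < b) (f : ℝ → ℝ) (hf : Continuous f) :
    IntervalIntegrable (fun r => f r / r) MeasureTheory.volume a b := by
  apply ContinuousOn.intervalIntegrable
  apply ContinuousOn.div hf.continuousOn continuousOn_id
  intro x hx
  have : (0:ℝ) < x := lt_of_lt_of_le (lt_min ha hb) hx.1
  exact ne_of_gt this

/-- Strict monotonicity of the ratio ksm/kms (cross-multiplied form). -/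
lemma cross (hφ0 : 0 < φ) (hφ1 : φ ≤ 1) (hμ0 : 0 < μ) (hμψ : μ ≤ ψ) (hω : 0 < ω)
    (hne : φ < 1 ∨ μ < ψ) {r s : ℝ} (hr : 0 < r) (hrs : r < s) :
    ksm φ s * kms ψ μ ω r < ksm φ r * kms ψ μ ω s := by
  have hksm_le : ksm φ s ≤ ksm φ r := by
    unfold ksm
    have : Real.exp (-s) ≤ Real.exp (-r) := Real.exp_le_exp.2 (by linarith)
    nlinarith
  have hkms_le : kms ψ μ ω r ≤ kms ψ μ ω s := by
    unfold kms
    have : Real.exp (-ω * s) ≤ Real.exp (-ω * r) := Real.exp_le_exp.2 (by nlinarith)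
    nlinarith
  have h1 : 0 < ksm φ r := ksm_pos hφ0 hφ1 r
  have h2 : 0 < kms ψ μ ω r := kms_pos hμ0 hμψ hω hr.le
  have h3 : 0 < kms ψ μ ω s := kms_pos hμ0 hμψ hω (by linarith)
  rcases hne with h | h
  · have hlt : ksm φ s < ksm φ r := by
      unfold ksm
      have : Real.exp (-s) < Real.exp (-r) := Real.exp_lt_exp.2 (by linarith)
      nlinarith
    nlinarith
  · have hlt : kms ψ μ ω r < kms ψ μ ω s := by
      unfold kms
      have : Real.exp (-ω * s) < Real.exp (-ω * r) := Real.exp_lt_exp.2 (by nlinarith)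
      nlinarith
    nlinarith

lemma I1_pos (hφ0 : 0 < φ) (hφ1 : φ ≤ 1) {a b : ℝ} (ha : 0 < a) (hab : a < b) :
    0 < I1 φ a b := by
  apply intervalIntegral.intervalIntegral_pos_of_pos_on
    (intgr_aux ha (by linarith) _ ksm_cont)
  · intro x hx
    exact div_pos (ksm_pos hφ0 hφ1 x) (by linarith [hx.1])
  · exact hab

lemma I2_pos (hμ0 : 0 < μ) (hμψ : μ ≤ ψ) (hω : 0 < ω) {a b : ℝ} (ha : 0 < a) (hab : a < b) :
    0 < I2 ψ μ ω a b := by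
  apply intervalIntegral.intervalIntegral_pos_of_pos_on
    (intgr_aux ha (by linarith) _ kms_cont)
  · intro x hx
    exact div_pos (kms_pos hμ0 hμψ hω (by linarith [hx.1])) (by linarith [hx.1])
  · exact hab

/-- Linear-combination integral splitting. -/
lemma comb_eq {a b K M : ℝ} (ha : 0 < a) (hb : 0 < b) :
    (∫ r in a..b, (M * ksm φ r - K * kms ψ μ ω r) / r) =
      M * I1 φ a b - K * I2 ψ μ ω a b := by
  have h1 : IntervalIntegrable (fun r => M * (ksm φ r / r)) MeasureTheory.volume a b :=
    (intgr_aux ha hb _ ksm_cont).const_mul M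
  have h2 : IntervalIntegrable (fun r => K * (kms ψ μ ω r / r)) MeasureTheory.volume a b :=
    (intgr_aux ha hb _ kms_cont).const_mul K
  have : (fun r => (M * ksm φ r - K * kms ψ μ ω r) / r) =
      fun r => M * (ksm φ r / r) - K * (kms ψ μ ω r / r) := by
    funext r; ring
  rw [this, intervalIntegral.integral_sub h1 h2,
    intervalIntegral.integral_const_mul, intervalIntegral.integral_const_mul]
  rfl

/-- On (a₂,a₁): I1 compares favourably against the ratio at a₁. -/
lemma L1 (hφ0 : 0 < φ) (hφ1 : φ ≤ 1) (hμ0 : 0 < μ) (hμψ : μ ≤ ψ) (hω : 0 < ω)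
    (hne : φ < 1 ∨ μ < ψ) {a₂ a₁ : ℝ} (h0 : 0 < a₂) (h12 : a₂ < a₁) :
    ksm φ a₁ * I2 ψ μ ω a₂ a₁ < kms ψ μ ω a₁ * I1 φ a₂ a₁ := by
  have key : 0 < ∫ r in a₂..a₁,
      (kms ψ μ ω a₁ * ksm φ r - ksm φ a₁ * kms ψ μ ω r) / r := by
    apply intervalIntegral.intervalIntegral_pos_of_pos_on
    · have h1 : IntervalIntegrable (fun r => ksm φ r / r) MeasureTheory.volume a₂ a₁ :=
        intgr_aux h0 (by linarith) _ ksm_cont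
      have h2 : IntervalIntegrable (fun r => kms ψ μ ω r / r) MeasureTheory.volume a₂ a₁ :=
        intgr_aux h0 (by linarith) _ kms_cont
      have := (h1.const_mul (kms ψ μ ω a₁)).sub (h2.const_mul (ksm φ a₁))
      convert this using 1
      funext r; ring
    · intro x hx
      have hx0 : 0 < x := lt_trans h0 hx.1
      have := cross hφ0 hφ1 hμ0 hμψ hω hne hx0 hx.2
      exact div_pos (by nlinarith) hx0
    · exact h12
  rw [comb_eq h0 (by linarith)] at key
  linarith

/-- On (a₁,b): I1 compares unfavourably against the ratio at a₁. -/
lemma L2 (hφ0 : 0 < φ) (hφ1 : φ ≤ 1) (hμ0 : 0 < μ) (hμψ : μ ≤ ψ) (hω : 0 < ω)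
    (hne : φ < 1 ∨ μ < ψ) {a₁ b : ℝ} (h0 : 0 < a₁) (h1b : a₁ < b) :
    kms ψ μ ω a₁ * I1 φ a₁ b < ksm φ a₁ * I2 ψ μ ω a₁ b := by
  have key : 0 < ∫ r in a₁..b,
      (ksm φ a₁ * kms ψ μ ω r - kms ψ μ ω a₁ * ksm φ r) / r := by
    apply intervalIntegral.intervalIntegral_pos_of_pos_on
    · have h1 : IntervalIntegrable (fun r => ksm φ r / r) MeasureTheory.volume a₁ b :=
        intgr_aux h0 (by linarith) _ ksm_cont
      have h2 : IntervalIntegrable (fun r => kms ψ μ ω r / r) MeasureTheory.volume a₁ b :=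
        intgr_aux h0 (by linarith) _ kms_cont
      have := (h2.const_mul (ksm φ a₁)).sub (h1.const_mul (kms ψ μ ω a₁))
      convert this using 1
      funext r; ring
    · intro x hx
      have hx0 : 0 < x := lt_trans h0 hx.1
      have := cross hφ0 hφ1 hμ0 hμψ hω hne h0 hx.1
      exact div_pos (by nlinarith) hx0
    · exact h1b
  have heq : (∫ r in a₁..b, (ksm φ a₁ * kms ψ μ ω r - kms ψ μ ω a₁ * ksm φ r) / r) =
      -(kms ψ μ ω a₁ * I1 φ a₁ b - ksm φ a₁ * I2 ψ μ ω a₁ b) := by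
    rw [← comb_eq h0 (by linarith), ← intervalIntegral.integral_neg]
    congr 1; funext r; ring
  rw [heq] at key
  linarith

/-- Strict decrease of the ratio I1/I2 in cross-multiplied form. -/
lemma gmono (hφ0 : 0 < φ) (hφ1 : φ ≤ 1) (hμ0 : 0 < μ) (hμψ : μ ≤ ψ) (hω : 0 < ω)
    (hne : φ < 1 ∨ μ < ψ) {a₂ a₁ b : ℝ} (h0 : 0 < a₂) (h12 : a₂ < a₁) (h1b : a₁ < b) :
    I1 φ a₁ b * I2 ψ μ ω a₂ b < I1 φ a₂ b * I2 ψ μ ω a₁ b := by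
  have hb0 : 0 < b := by linarith
  have hsplit1 : I1 φ a₂ b = I1 φ a₂ a₁ + I1 φ a₁ b := by
    unfold I1
    rw [intervalIntegral.integral_add_adjacent_intervals
      (intgr_aux h0 (by linarith) _ ksm_cont) (intgr_aux (by linarith) hb0 _ ksm_cont)]
  have hsplit2 : I2 ψ μ ω a₂ b = I2 ψ μ ω a₂ a₁ + I2 ψ μ ω a₁ b := by
    unfold I2
    rw [intervalIntegral.integral_add_adjacent_intervals
      (intgr_aux h0 (by linarith) _ kms_cont) (intgr_aux (by linarith) hb0 _ kms_cont)]
  set x := I1 φ a₂ a₁ with hx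
  set p := I1 φ a₁ b with hp
  set y := I2 ψ μ ω a₂ a₁ with hy
  set q := I2 ψ μ ω a₁ b with hq
  set K := ksm φ a₁ with hK
  set M := kms ψ μ ω a₁ with hM
  have hK0 : 0 < K := ksm_pos hφ0 hφ1 a₁
  have hM0 : 0 < M := kms_pos hμ0 hμψ hω (by linarith)
  have hx0 : 0 < x := I1_pos hφ0 hφ1 h0 h12
  have hp0 : 0 < p := I1_pos hφ0 hφ1 (by linarith) h1b
  have hy0 : 0 < y := I2_pos hμ0 hμψ hω h0 h12
  have hq0 : 0 < q := I2_pos hμ0 hμψ hω (by linarith) h1b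
  have l1 : K * y < M * x := L1 hφ0 hφ1 hμ0 hμψ hω hne h0 h12
  have l2 : M * p < K * q := L2 hφ0 hφ1 hμ0 hμψ hω hne (by linarith) h1b
  rw [hsplit1, hsplit2]
  -- want : p * (y + q) < (x + p) * q, i.e. p*y < x*q
  have key : p * y < x * q := by nlinarith
  nlinarith

end Aux

/-- Monotonicity theorem: for traveling-wave triples (c, R⁻, N) with fixed R⁺,
the speed c is strictly increasing in the mass N and R⁻ is strictly decreasing in N. -/
theorem speed_mono_in_mass (φ ψ μ ω Rplus : ℝ)
    (hφ0 : 0 < φ) (hφ1 : φ ≤ 1) (hμ0 : 0 < μ) (hμψ : μ ≤ ψ) (hω : 0 < ω)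
    (hne : φ < 1 ∨ μ < ψ) (hRp : 0 < Rplus)
    (c₁ c₂ Rm₁ Rm₂ N₁ N₂ : ℝ)
    (hc₁0 : 0 < c₁) (hc₁1 : c₁ < 1) (hc₂0 : 0 < c₂) (hc₂1 : c₂ < 1)
    (hRm₁ : 0 < Rm₁) (hRm₁p : Rm₁ < Rplus) (hRm₂ : 0 < Rm₂) (hRm₂p : Rm₂ < Rplus)
    (hrat₁ : c₁ / (1 - c₁) = I1 φ Rm₁ Rplus / I2 ψ μ ω Rm₁ Rplus)
    (hrat₂ : c₂ / (1 - c₂) = I1 φ Rm₂ Rplus / I2 ψ μ ω Rm₂ Rplus)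
    (hN₁ : N₁ = (c₁ / (1 - c₁)) * Real.log (Rplus / Rm₁))
    (hN₂ : N₂ = (c₂ / (1 - c₂)) * Real.log (Rplus / Rm₂))
    (hNlt : N₁ < N₂) :
    c₁ < c₂ ∧ Rm₂ < Rm₁ := by
  -- the map a ↦ (I1/I2)(a, Rplus) * log(Rplus/a) is strictly decreasing
  have hmain : ∀ a b : ℝ, 0 < a → a < b → b < Rplus →
      (I1 φ b Rplus / I2 ψ μ ω b Rplus) * Real.log (Rplus / b) <
      (I1 φ a Rplus / I2 ψ μ ω a Rplus) * Real.log (Rplus / a) := by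
    intro a b ha hab hbR
    have hI2a : 0 < I2 ψ μ ω a Rplus := I2_pos hμ0 hμψ hω ha (by linarith)
    have hI2b : 0 < I2 ψ μ ω b Rplus := I2_pos hμ0 hμψ hω (by linarith) hbR
    have hI1a : 0 < I1 φ a Rplus := I1_pos hφ0 hφ1 ha (by linarith)
    have hI1b : 0 < I1 φ b Rplus := I1_pos hφ0 hφ1 (by linarith) hbR
    have hg : I1 φ b Rplus / I2 ψ μ ω b Rplus < I1 φ a Rplus / I2 ψ μ ω a Rplus := by
      rw [div_lt_div_iff₀ hI2b hI2a]
      exact gmono hφ0 hφ1 hμ0 hμψ hω hne ha hab hbR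
    have hlogb : 0 < Real.log (Rplus / b) :=
      Real.log_pos (by rw [lt_div_iff₀ (by linarith)]; linarith)
    have hlog : Real.log (Rplus / b) < Real.log (Rplus / a) := by
      apply Real.log_lt_log (div_pos hRp (by linarith))
      apply div_lt_div_of_pos_left hRp ha hab
    have hga : 0 < I1 φ a Rplus / I2 ψ μ ω a Rplus := div_pos hI1a hI2a
    calc I1 φ b Rplus / I2 ψ μ ω b Rplus * Real.log (Rplus / b)
        < I1 φ a Rplus / I2 ψ μ ω a Rplus * Real.log (Rplus / b) :=
          (mul_lt_mul_iff_left₀ hlogb).2 hg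
      _ < I1 φ a Rplus / I2 ψ μ ω a Rplus * Real.log (Rplus / a) :=
          (mul_lt_mul_iff_right₀ hga).2 hlog
  have hRmlt : Rm₂ < Rm₁ := by
    rcases lt_trichotomy Rm₁ Rm₂ with h | h | h
    · exfalso
      have := hmain Rm₁ Rm₂ hRm₁ h hRm₂p
      rw [← hrat₁, ← hrat₂] at this
      rw [hN₁, hN₂] at hNlt
      linarith
    · exfalso
      rw [hN₁, hN₂, hrat₁, hrat₂, h] at hNlt
      exact lt_irrefl _ hNlt
    · exact h
  refine ⟨?_, hRmlt⟩
  have hg : I1 φ Rm₁ Rplus / I2 ψ μ ω Rm₁ Rplus <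
      I1 φ Rm₂ Rplus / I2 ψ μ ω Rm₂ Rplus := by
    rw [div_lt_div_iff₀ (I2_pos hμ0 hμψ hω hRm₁ hRm₁p) (I2_pos hμ0 hμψ hω hRm₂ hRm₂p)]
    exact gmono hφ0 hφ1 hμ0 hμψ hω hne hRm₂ hRmlt hRm₁p
  rw [← hrat₁, ← hrat₂] at hg
  rw [div_lt_div_iff₀ (by linarith) (by linarith)] at hg
  nlinarith
end
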